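/- Let Π_M⊆Π and let (σ,U) be a finite-dimensional H_M-module. Suppose there exists ν∈V∨_ℂ with (α,ν)=0 for all α∈Π_M and (α,Re ν)>0 for all α∈Π∖Π_M, such that every generalized S(V_ℂ)-weight μ of U satisfies: μ−ν lies in the ℂ-span of {α∨:α∈Π_M} and Re(μ−ν)=−Σ_{α∈Π_M} d_α·α∨ with all d_α≥0. Then for every such weight μ of U, the generalized weight space of the induced module satisfies dim X(M,σ)_μ = dim U_μ. -/

import Mathlib

/- Formalization of the setting of Barbasch–Ciubotaru, "Hermitian forms for
affine Hecke algebras": a reduced root system, Weyl group, parameters,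
complexifications, and the graded affine Hecke algebra. -/

noncomputable section

structure GHA where
  (V Vd VC VdC W H : Type)
  [addV : AddCommGroup V] [modV : Module ℝ V] [fdV : FiniteDimensional ℝ V]
  [addVd : AddCommGroup Vd] [modVd : Module ℝ Vd] [fdVd : FiniteDimensional ℝ Vd]
  [deqV : DecidableEq V] [deqW : DecidableEq W]
  [addVC : AddCommGroup VC] [modVC : Module ℂ VC]
  [addVdC : AddCommGroup VdC] [modVdC : Module ℂ VdC]
  [grpW : Group W] [finW : Fintype W]
  [ringH : Ring H] [algH : Algebra ℂ H]
  -- the perfect bilinear pairing between V and V∨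
  pairR : V →ₗ[ℝ] Vd →ₗ[ℝ] ℝ
  pair_nondeg_left : ∀ v : V, (∀ u : Vd, pairR v u = 0) → v = 0
  pair_nondeg_right : ∀ u : Vd, (∀ v : V, pairR v u = 0) → u = 0
  -- roots, coroots, and the bijection α ↦ α∨
  roots : Finset V
  corootsF : Finset Vd
  cv : V → Vd
  roots_ne_zero : ∀ α ∈ roots, α ≠ 0
  coroots_ne_zero : ∀ β ∈ corootsF, β ≠ 0
  cv_mem : ∀ α ∈ roots, cv α ∈ corootsF
  cv_injOn : Set.InjOn cv roots
  cv_surjOn : ∀ β ∈ corootsF, ∃ α ∈ roots, cv α = β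
  pair_cv_self : ∀ α ∈ roots, pairR α (cv α) = 2
  reflV_mem : ∀ α ∈ roots, ∀ β ∈ roots, β - pairR β (cv α) • α ∈ roots
  reflVd_mem : ∀ α ∈ roots, ∀ β ∈ corootsF, β - pairR α β • cv α ∈ corootsF
  reduced : ∀ α ∈ roots, (2 : ℝ) • α ∉ roots
  -- simple roots and positive roots
  simples : Finset V
  posRoots : Finset V
  simples_subset : simples ⊆ posRoots
  posRoots_subset : posRoots ⊆ roots
  roots_pos_or_neg : ∀ α ∈ roots, α ∈ posRoots ∨ -α ∈ posRoots
  posRoots_not_neg : ∀ α ∈ posRoots, -α ∉ posRoots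
  simples_linearIndependent : LinearIndependent ℝ (fun β : {x // x ∈ simples} => (β : V))
  posRoots_nonneg_comb : ∀ α ∈ posRoots, ∃ c : V → ℝ,
    (∀ β ∈ simples, 0 ≤ c β) ∧ α = ∑ β ∈ simples, c β • β
  -- the Weyl group, acting on V and V∨, generated by the reflections s_α
  s : V → W
  actV : W →* V ≃ₗ[ℝ] V
  actVd : W →* Vd ≃ₗ[ℝ] Vd
  actV_s : ∀ α ∈ roots, ∀ v : V, actV (s α) v = v - pairR v (cv α) • α
  actVd_s : ∀ α ∈ roots, ∀ u : Vd, actVd (s α) u = u - pairR α u • cv α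
  act_pair : ∀ (w : W) (v : V) (u : Vd), pairR (actV w v) (actVd w u) = pairR v u
  actV_faithful : ∀ w : W, (∀ v : V, actV w v = v) → w = 1
  gen_by_refl : Subgroup.closure (s '' roots) = (⊤ : Subgroup W)
  actV_roots : ∀ (w : W), ∀ α ∈ roots, actV w α ∈ roots
  -- the longest element
  w0 : W
  w0_neg : ∀ α ∈ posRoots, -(actV w0 α) ∈ posRoots
  w0_unique : ∀ w : W, (∀ α ∈ posRoots, -(actV w α) ∈ posRoots) → w = w0
  -- the parameter function k (extended W-invariantly to all roots)
  kpar : V → ℝ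
  kpar_invariant : ∀ (w : W), ∀ α ∈ roots, kpar (actV w α) = kpar α
  -- complexifications of V and V∨, with real and imaginary parts
  iV : V →+ VC
  iVd : Vd →+ VdC
  iV_smul : ∀ (r : ℝ) (v : V), iV (r • v) = (r : ℂ) • iV v
  iVd_smul : ∀ (r : ℝ) (u : Vd), iVd (r • u) = (r : ℂ) • iVd u
  reV : VC →+ V
  imV : VC →+ V
  reVd : VdC →+ Vd
  imVd : VdC →+ Vd
  reV_iV : ∀ v : V, reV (iV v) = v
  imV_iV : ∀ v : V, imV (iV v) = 0
  reVd_iVd : ∀ u : Vd, reVd (iVd u) = u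
  imVd_iVd : ∀ u : Vd, imVd (iVd u) = 0
  vc_decomp : ∀ x : VC, x = iV (reV x) + Complex.I • iV (imV x)
  vdc_decomp : ∀ y : VdC, y = iVd (reVd y) + Complex.I • iVd (imVd y)
  reV_real_smul : ∀ (r : ℝ) (x : VC), reV ((r : ℂ) • x) = r • reV x
  imV_real_smul : ∀ (r : ℝ) (x : VC), imV ((r : ℂ) • x) = r • imV x
  reVd_real_smul : ∀ (r : ℝ) (y : VdC), reVd ((r : ℂ) • y) = r • reVd y
  imVd_real_smul : ∀ (r : ℝ) (y : VdC), imVd ((r : ℂ) • y) = r • imVd y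
  -- the complex bilinear extension of the pairing
  pairC : VC → VdC → ℂ
  pairC_add_left : ∀ x x' y, pairC (x + x') y = pairC x y + pairC x' y
  pairC_add_right : ∀ x y y', pairC x (y + y') = pairC x y + pairC x y'
  pairC_smul_left : ∀ (c : ℂ) x y, pairC (c • x) y = c * pairC x y
  pairC_smul_right : ∀ (c : ℂ) x y, pairC x (c • y) = c * pairC x y
  pairC_compat : ∀ (v : V) (u : Vd), pairC (iV v) (iVd u) = (pairR v u : ℂ)
  -- the complexified Weyl group actions
  actVC : W →* VC ≃ₗ[ℂ] VC
  actVdC : W →* VdC ≃ₗ[ℂ] VdC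
  actVC_iV : ∀ (w : W) (v : V), actVC w (iV v) = iV (actV w v)
  actVdC_iVd : ∀ (w : W) (u : Vd), actVdC w (iVd u) = iVd (actVd w u)
  -- the graded affine Hecke algebra H: elements t_w and the subalgebra S(V_ℂ)
  t : W → H
  t_one : t 1 = 1
  t_mul : ∀ w w', t w * t w' = t (w * w')
  θ : VC → H
  θ_add : ∀ x y, θ (x + y) = θ x + θ y
  θ_smul : ∀ (c : ℂ) (x : VC), θ (c • x) = c • θ x
  θ_comm : ∀ x y, θ x * θ y = θ y * θ x
  -- the graded Hecke algebra cross relation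
  cross_rel : ∀ α ∈ simples, ∀ ω : VC,
    θ ω * t (s α) = t (s α) * θ (actVC (s α) ω)
      + algebraMap ℂ H ((kpar α : ℂ) * pairC ω (iVd (cv α)))
  -- H ≅ ℂ[W] ⊗ S(V_ℂ) as a (ℂ[W], S(V_ℂ))-bimodule
  pbw_span : ∀ h : H, ∃ c : W → Algebra.adjoin ℂ (Set.range θ),
    h = ∑ w : W, t w * (c w : H)
  pbw_indep : ∀ c : W → Algebra.adjoin ℂ (Set.range θ),
    ∑ w : W, t w * (c w : H) = 0 → ∀ w, c w = 0
  -- the subalgebra generated by θ(V_ℂ) is the symmetric algebra S(V_ℂ)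
  poly_univ : ∀ (B : Type) [CommRing B] [Algebra ℂ B] (f : VC → B),
    (∀ x y, f (x + y) = f x + f y) → (∀ (c : ℂ) x, f (c • x) = c • f x) →
    ∃! g : Algebra.adjoin ℂ (Set.range θ) →ₐ[ℂ] B,
      ∀ x : VC, g ⟨θ x, Algebra.subset_adjoin ⟨x, rfl⟩⟩ = f x

attribute [instance] GHA.addV GHA.modV GHA.fdV GHA.addVd GHA.modVd GHA.fdVd
  GHA.deqV GHA.deqW GHA.addVC GHA.modVC GHA.addVdC GHA.modVdC GHA.grpW GHA.finW
  GHA.ringH GHA.algH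

namespace GHA

/-- Complex conjugation on V_ℂ. -/
def conjVC (D : GHA) (x : D.VC) : D.VC := D.iV (D.reV x) - Complex.I • D.iV (D.imV x)

/-- Complex conjugation on V∨_ℂ. -/
def conjVdC (D : GHA) (y : D.VdC) : D.VdC := D.iVd (D.reVd y) - Complex.I • D.iVd (D.imVd y)

/-- The bullet operation: conjugate-linear anti-automorphism with t_w ↦ t_{w⁻¹},
ω ↦ conj ω. -/
structure IsBullet (D : GHA) (f : D.H → D.H) : Prop where
  map_add : ∀ x y, f (x + y) = f x + f y
  map_smul : ∀ (c : ℂ) (x : D.H), f (c • x) = (starRingEnd ℂ) c • f x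
  map_mul : ∀ x y, f (x * y) = f y * f x
  map_one : f 1 = 1
  map_t : ∀ w : D.W, f (D.t w) = D.t w⁻¹
  map_theta : ∀ x : D.VC, f (D.θ x) = D.θ (D.conjVC x)

/-- The star operation: conjugate-linear anti-automorphism with t_w ↦ t_{w⁻¹},
ω ↦ −t_{w₀}·conj(w₀(ω))·t_{w₀}. -/
structure IsStar (D : GHA) (f : D.H → D.H) : Prop where
  map_add : ∀ x y, f (x + y) = f x + f y
  map_smul : ∀ (c : ℂ) (x : D.H), f (c • x) = (starRingEnd ℂ) c • f x
  map_mul : ∀ x y, f (x * y) = f y * f x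
  map_one : f 1 = 1
  map_t : ∀ w : D.W, f (D.t w) = D.t w⁻¹
  map_theta : ∀ x : D.VC,
    f (D.θ x) = -(D.t D.w0 * D.θ (D.conjVC (D.actVC D.w0 x)) * D.t D.w0)

/-- The automorphism δ: t_w ↦ t_{w₀ww₀}, ω ↦ −w₀(ω). -/
structure IsDelta (D : GHA) (f : D.H → D.H) : Prop where
  map_add : ∀ x y, f (x + y) = f x + f y
  map_smul : ∀ (c : ℂ) (x : D.H), f (c • x) = c • f x
  map_mul : ∀ x y, f (x * y) = f x * f y
  map_one : f 1 = 1
  map_t : ∀ w : D.W, f (D.t w) = D.t (D.w0 * w * D.w0)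
  map_theta : ∀ x : D.VC, f (D.θ x) = -(D.θ (D.actVC D.w0 x))

/-- The standing assumption k_{−w₀(α)} = k_α for α ∈ Π. -/
def KSymm (D : GHA) : Prop := ∀ α ∈ D.simples, D.kpar (-(D.actV D.w0 α)) = D.kpar α

section Forms

variable {X : Type} [AddCommGroup X] [Module ℂ X]

/-- Sesquilinear form (conjugate-linear in the first variable). -/
def SesqForm (B : X → X → ℂ) : Prop :=
  (∀ x x' y, B (x + x') y = B x y + B x' y) ∧
  (∀ x y y', B x (y + y') = B x y + B x y') ∧
  (∀ (c : ℂ) (x y : X), B (c • x) y = (starRingEnd ℂ) c * B x y) ∧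
  (∀ (c : ℂ) (x y : X), B x (c • y) = c * B x y)

/-- Hermitian form. -/
def HermForm (B : X → X → ℂ) : Prop := ∀ x y, B x y = (starRingEnd ℂ) (B y x)

/-- κ-invariance of a form: ⟨π(h)x, y⟩ = ⟨x, π(κ(h))y⟩. -/
def InvForm (D : GHA) (π : D.H →ₐ[ℂ] Module.End ℂ X) (κ : D.H → D.H)
    (B : X → X → ℂ) : Prop :=
  ∀ (h : D.H) (x y : X), B (π h x) y = B x (π (κ h) y)

end Forms

/-- Irreducibility of a representation of a ℂ-algebra A on X. -/
def IsIrrRep (A : Type) [Ring A] [Algebra ℂ A] {X : Type} [AddCommGroup X]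
    [Module ℂ X] (π : A →ₐ[ℂ] Module.End ℂ X) : Prop :=
  Nontrivial X ∧ ∀ U : Submodule ℂ X, (∀ (a : A), ∀ x ∈ U, π a x ∈ U) → U = ⊥ ∨ U = ⊤

/-- Generalized weight space for a commuting family of operators indexed by V_ℂ. -/
def wtAux (D : GHA) {X : Type} [AddCommGroup X] [Module ℂ X]
    (T : D.VC → Module.End ℂ X) (lam : D.VdC) : Submodule ℂ X where
  carrier := {x | ∀ ω : D.VC, ∃ n : ℕ,
    ((T ω - D.pairC ω lam • (1 : Module.End ℂ X)) ^ n) x = 0}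
  zero_mem' := fun ω => ⟨1, by simp⟩
  add_mem' := by
    intro a b ha hb
    intro ω
    obtain ⟨n, hn⟩ := ha ω
    obtain ⟨m, hm⟩ := hb ω
    refine ⟨n + m, ?_⟩
    have hA : ((T ω - D.pairC ω lam • (1 : Module.End ℂ X)) ^ (n + m)) a = 0 := by
      rw [add_comm, pow_add, Module.End.mul_apply, hn, map_zero]
    have hB : ((T ω - D.pairC ω lam • (1 : Module.End ℂ X)) ^ (n + m)) b = 0 := by
      rw [pow_add, Module.End.mul_apply, hm, map_zero]
    rw [map_add, hA, hB, add_zero]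
  smul_mem' := by
    intro c a ha ω
    obtain ⟨n, hn⟩ := ha ω
    exact ⟨n, by rw [map_smul, hn, smul_zero]⟩

/-- Generalized A-weight space X_λ of an H-module. -/
def wtH (D : GHA) {X : Type} [AddCommGroup X] [Module ℂ X]
    (π : D.H →ₐ[ℂ] Module.End ℂ X) (lam : D.VdC) : Submodule ℂ X :=
  D.wtAux (fun ω => π (D.θ ω)) lam

/-- The set Ω(X) of A-weights of an H-module. -/
def OmegaH (D : GHA) {X : Type} [AddCommGroup X] [Module ℂ X]
    (π : D.H →ₐ[ℂ] Module.End ℂ X) : Set D.VdC :=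
  {lam | D.wtH π lam ≠ ⊥}

/-- Casselman's criterion for temperedness. -/
def IsTempered (D : GHA) {X : Type} [AddCommGroup X] [Module ℂ X]
    (π : D.H →ₐ[ℂ] Module.End ℂ X) : Prop :=
  ∀ lam ∈ D.OmegaH π, ∀ ω : D.V,
    (∀ α ∈ D.simples, 0 < D.pairR ω (D.cv α)) → D.pairR ω (D.reVd lam) ≤ 0

section Parabolic

variable (D : GHA) (PiM : Finset D.V)

/-- The parabolic subgroup W_M. -/
def WM : Subgroup D.W := Subgroup.closure (D.s '' (PiM : Set D.V))

/-- The positive roots R⁺_M lying in the span of Π_M. -/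
def RplusM : Set D.V :=
  {α | α ∈ D.posRoots ∧ α ∈ Submodule.span ℝ (PiM : Set D.V)}

/-- x is the minimal length representative of x·W_M, i.e. x(R⁺_M) ⊆ R⁺. -/
def IsMinRep (x : D.W) : Prop := ∀ α ∈ D.RplusM PiM, D.actV x α ∈ D.posRoots

/-- The set J_M of minimal length coset representatives. -/
abbrev JM : Type := {x : D.W // D.IsMinRep PiM x}

/-- The parabolic subalgebra H_M. -/
def HM : Subalgebra ℂ D.H :=
  Algebra.adjoin ℂ (Set.range D.θ ∪ (D.t '' ((D.WM PiM : Subgroup D.W) : Set D.W)))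

/-- t_w as an element of H_M, for w ∈ W_M. -/
def tM (w : D.W) (hw : w ∈ D.WM PiM) : D.HM PiM :=
  ⟨D.t w, Algebra.subset_adjoin (Or.inr ⟨w, hw, rfl⟩)⟩

/-- θ(ω) as an element of H_M. -/
def θM (x : D.VC) : D.HM PiM :=
  ⟨D.θ x, Algebra.subset_adjoin (Or.inl ⟨x, rfl⟩)⟩

/-- Π_{δ(M)} = −w₀(Π_M). -/
def deltaSimples : Finset D.V := PiM.image (fun α => -(D.actV D.w0 α))

/-- w is the longest element of W_M. -/
def IsLongest (w : D.W) : Prop :=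
  w ∈ D.WM PiM ∧ ∀ α ∈ D.RplusM PiM, -(D.actV w α) ∈ D.RplusM PiM

end Parabolic

/-- The unique factorization z = c_M(z)·m_M(z) with c_M(z) minimal in z·W_M and
m_M(z) ∈ W_M. -/
structure CosetData (D : GHA) (PiM : Finset D.V) where
  c : D.W → D.W
  m : D.W → D.W
  c_min : ∀ z, D.IsMinRep PiM (c z)
  m_mem : ∀ z, m z ∈ D.WM PiM
  factor : ∀ z, z = c z * m z
  uniq : ∀ (z c' m' : D.W), D.IsMinRep PiM c' → m' ∈ D.WM PiM → z = c' * m' →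
    c' = c z ∧ m' = m z

/-- The defining formulas for the H-action on the parabolically induced module
X(M,σ) = H ⊗_{H_M} U, realized on ⊕_{x ∈ J_M} U. -/
def IsInducedAction (D : GHA) (PiM : Finset D.V) (cd : CosetData D PiM)
    {U : Type} [AddCommGroup U] [Module ℂ U]
    (σ : D.HM PiM →ₐ[ℂ] Module.End ℂ U)
    (πI : D.H →ₐ[ℂ] Module.End ℂ (D.JM PiM → U)) : Prop :=
  (∀ (z : D.W) (x : D.JM PiM) (v : U),
      πI (D.t z) (Pi.single x v) =
        Pi.single (⟨cd.c (z * x.1), cd.c_min _⟩ : D.JM PiM)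
          (σ (D.tM PiM (cd.m (z * x.1)) (cd.m_mem _)) v)) ∧
  (∀ (ω : D.VC) (x : D.JM PiM) (v : U),
      πI (D.θ ω) (Pi.single x v) =
        Pi.single x (σ (D.θM PiM (D.actVC x.1⁻¹ ω)) v) +
          ∑ β ∈ D.posRoots.filter (fun β => -(D.actV x.1⁻¹ β) ∈ D.posRoots),
            ((D.kpar β : ℂ) * D.pairC ω (D.iVd (D.cv β))) •
              (Pi.single (⟨cd.c (D.s β * x.1), cd.c_min _⟩ : D.JM PiM)
                (σ (D.tM PiM (cd.m (D.s β * x.1)) (cd.m_mem _)) v) : D.JM PiM → U))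

end GHA

/-!
Write `λ = Re ν`; it lies in the open face of the dominant chamber cut out by `Π_M`, so its
stabilizer is `W_M`, and the real part of every weight of `U` lies in `λ - ℝ≥0·Π_M∨`.
Order the summands `x ∈ J_M` of `X(M,σ)` by the height of `xλ`, measured against `ρ∨` with a
`W`-invariant inner product: the off-diagonal terms of `θ(ω)` strictly raise it, so `S(V_ℂ)` acts
triangularly and the lowest nonzero component `x` of a `μ`-weight vector is a weight vector of
`U` of weight `x⁻¹μ`. Then both `Re(x⁻¹μ)` and `x·Re(x⁻¹μ) = Re μ` lie in `λ - ℝ≥0·Π_M∨`; pairing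
with `λ` forces `xλ = λ`, so `x ∈ W_M` and `x = 1`. Hence evaluation at the identity coset is an
isomorphism `X(M,σ)_μ ≅ U_μ`.
-/

section Triangular

variable {J ι : Type*} (F : J → ι)

lemma Module.End.pow_apply_of_triangular {R M : Type*} [Semiring R] [AddCommMonoid M]
    [Module R M] [Preorder ι] {T : Module.End R (J → M)}
    {A : J → Module.End R M} (hT : ∀ g p, (∀ z, F z < F p → g z = 0) → T g p = A p (g p))
    (n : ℕ) {g : J → M} {p : J} (hg : ∀ z, F z < F p → g z = 0) :
    (T ^ n) g p = (A p ^ n) (g p) := by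
  induction n generalizing g with
  | zero => rfl
  | succ n ih =>
    have hTg : ∀ z, F z < F p → T g z = 0 := fun z hz => by
      rw [hT g z fun y hy => hg y (hy.trans hz), hg z hz, map_zero]
    rw [pow_succ, Module.End.mul_apply, ih hTg, hT g p hg, pow_succ, Module.End.mul_apply]

lemma exists_lowest_ne_zero {M : Type*} [Zero M] [Finite J] [LinearOrder ι] {g : J → M} {z : J}
    (hz : g z ≠ 0) : ∃ x, g x ≠ 0 ∧ F x ≤ F z ∧ ∀ y, F y < F x → g y = 0 := by
  obtain ⟨x, hx, hmin⟩ := Set.exists_min_image {y | g y ≠ 0} F (Set.toFinite _) ⟨z, hz⟩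
  exact ⟨x, hx, hmin z hz, fun y hy => by_contra fun h => (hmin y h).not_gt hy⟩

end Triangular

namespace GHA

variable (D : GHA)

section RootSystem

lemma cv_ne_zero {α : D.V} (hα : α ∈ D.roots) : D.cv α ≠ 0 := by
  intro h
  simpa [h] using D.pair_cv_self α hα

lemma s_mul_self {α : D.V} (hα : α ∈ D.roots) : D.s α * D.s α = 1 := by
  refine D.actV_faithful _ fun v => ?_
  rw [map_mul, LinearEquiv.mul_apply, D.actV_s α hα, D.actV_s α hα, map_sub, map_smul,
    LinearMap.sub_apply, LinearMap.smul_apply, D.pair_cv_self α hα]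
  module

lemma actVd_s_cv {α : D.V} (hα : α ∈ D.roots) : D.actVd (D.s α) (D.cv α) = -D.cv α := by
  rw [D.actVd_s α hα, D.pair_cv_self α hα]
  module

lemma pairR_actVd (w : D.W) (v : D.V) (u : D.Vd) :
    D.pairR v (D.actVd w u) = D.pairR (D.actV w⁻¹ v) u := by
  simpa using D.act_pair w (D.actV w⁻¹ v) u

lemma pairR_isPerfPair : D.pairR.IsPerfPair :=
  .of_injective
    ((injective_iff_map_eq_zero _).2 fun v hv => D.pair_nondeg_left v fun u => by simp [hv])
    ((injective_iff_map_eq_zero _).2 fun u hu =>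
      D.pair_nondeg_right u fun v => by simpa using congr($hu v))

lemma exists_pairR_simples_eq_one : ∃ e : D.Vd, ∀ δ ∈ D.simples, D.pairR δ e = 1 := by
  have hs : LinearIndepOn ℝ id (D.simples : Set D.V) := D.simples_linearIndependent
  have := D.pairR_isPerfPair
  refine ⟨D.pairR.flip.toPerfPair.symm (Module.Basis.extend hs).sumCoords, fun δ hδ => ?_⟩
  have hbδ : Module.Basis.extend hs ⟨δ, hs.subset_extend _ hδ⟩ = δ :=
    Module.Basis.extend_apply_self hs _
  rw [LinearMap.apply_toPerfPair_flip, ← hbδ, Module.Basis.sumCoords_self_apply]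

def rhoCheck : D.Vd := D.exists_pairR_simples_eq_one.choose

lemma pairR_rhoCheck {δ : D.V} (hδ : δ ∈ D.simples) : D.pairR δ D.rhoCheck = 1 :=
  D.exists_pairR_simples_eq_one.choose_spec δ hδ

lemma pairR_nonneg_of_mem_posRoots {lam : D.Vd} (hdom : ∀ δ ∈ D.simples, 0 ≤ D.pairR δ lam)
    {β : D.V} (hβ : β ∈ D.posRoots) : 0 ≤ D.pairR β lam := by
  obtain ⟨c, hc, rfl⟩ := D.posRoots_nonneg_comb β hβ
  simp only [map_sum, map_smul, LinearMap.sum_apply, LinearMap.smul_apply, smul_eq_mul]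
  exact Finset.sum_nonneg fun δ hδ => mul_nonneg (hc δ hδ) (hdom δ hδ)

lemma pairR_rhoCheck_pos {β : D.V} (hβ : β ∈ D.posRoots) : 0 < D.pairR β D.rhoCheck := by
  obtain ⟨c, hc, hβc⟩ := D.posRoots_nonneg_comb β hβ
  have hsum : D.pairR β D.rhoCheck = ∑ δ ∈ D.simples, c δ := by
    simp only [hβc, map_sum, map_smul, LinearMap.sum_apply, LinearMap.smul_apply, smul_eq_mul]
    exact Finset.sum_congr rfl fun δ hδ => by rw [D.pairR_rhoCheck hδ, mul_one]
  refine hsum ▸ (Finset.sum_nonneg hc).lt_of_ne fun h => ?_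
  have hc0 := (Finset.sum_eq_zero_iff_of_nonneg hc).1 h.symm
  exact D.roots_ne_zero β (D.posRoots_subset hβ)
    (hβc.trans (Finset.sum_eq_zero fun δ hδ => by rw [hc0 δ hδ, zero_smul]))

lemma pairR_rhoCheck_neg {β : D.V} (hβ : -β ∈ D.posRoots) : D.pairR β D.rhoCheck < 0 := by
  simpa using D.pairR_rhoCheck_pos hβ

lemma mem_span_of_pairR_eq_zero (PiM : Finset D.V) {lam : D.Vd}
    (hdom : ∀ δ ∈ D.simples, 0 ≤ D.pairR δ lam)
    (hsing : ∀ δ ∈ D.simples, D.pairR δ lam = 0 → δ ∈ PiM)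
    {β : D.V} (hβ : β ∈ D.posRoots) (h0 : D.pairR β lam = 0) :
    β ∈ Submodule.span ℝ (PiM : Set D.V) := by
  obtain ⟨c, hc, hβc⟩ := D.posRoots_nonneg_comb β hβ
  have hterm : ∀ δ ∈ D.simples, c δ * D.pairR δ lam = 0 := by
    refine (Finset.sum_eq_zero_iff_of_nonneg fun δ hδ => mul_nonneg (hc δ hδ) (hdom δ hδ)).1 ?_
    simpa [hβc, map_sum] using h0
  rw [hβc]
  refine Submodule.sum_mem _ fun δ hδ => ?_
  rcases mul_eq_zero.1 (hterm δ hδ) with h | h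
  · simp [h]
  · exact Submodule.smul_mem _ _ (Submodule.subset_span (hsing δ hδ h))

lemma eq_one_of_actV_posRoots {w : D.W} (h : ∀ β ∈ D.posRoots, D.actV w β ∈ D.posRoots) :
    w = 1 := by
  have hw0 : w * D.w0 = D.w0 :=
    D.w0_unique _ fun α hα => by simpa using h _ (D.w0_neg α hα)
  simpa using hw0

lemma exists_simple_neg_of_ne_one {w : D.W} (hw : w ≠ 1) :
    ∃ α ∈ D.simples, -D.actV w α ∈ D.posRoots := by
  by_contra! hpos
  refine hw (D.eq_one_of_actV_posRoots fun β hβ => ?_)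
  have hsimple : ∀ δ ∈ D.simples, D.actV w δ ∈ D.posRoots := fun δ hδ =>
    (D.roots_pos_or_neg _ (D.actV_roots w δ (D.posRoots_subset (D.simples_subset hδ)))
      ).resolve_right (hpos δ hδ)
  refine (D.roots_pos_or_neg _ (D.actV_roots w β (D.posRoots_subset hβ))).resolve_right
    fun hneg => (D.pairR_rhoCheck_neg hneg).not_ge ?_
  obtain ⟨c, hc, rfl⟩ := D.posRoots_nonneg_comb β hβ
  simp only [map_sum, map_smul, LinearMap.sum_apply, LinearMap.smul_apply, smul_eq_mul]
  exact Finset.sum_nonneg fun δ hδ =>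
    mul_nonneg (hc δ hδ) (D.pairR_rhoCheck_pos (hsimple δ hδ)).le

end RootSystem

section InvariantForm

def invForm : D.Vd →ₗ[ℝ] D.Vd →ₗ[ℝ] ℝ :=
  ∑ w : D.W, ∑ i, (LinearMap.mul ℝ ℝ).compl₁₂
    ((Module.finBasis ℝ D.Vd).coord i ∘ₗ (D.actVd w).toLinearMap)
    ((Module.finBasis ℝ D.Vd).coord i ∘ₗ (D.actVd w).toLinearMap)

lemma invForm_apply (u v : D.Vd) :
    D.invForm u v = ∑ w : D.W, ∑ i, (Module.finBasis ℝ D.Vd).coord i (D.actVd w u) *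
      (Module.finBasis ℝ D.Vd).coord i (D.actVd w v) := by
  simp [invForm]

lemma invForm_comm (u v : D.Vd) : D.invForm u v = D.invForm v u := by
  simp only [invForm_apply, mul_comm]

lemma invForm_self_pos {u : D.Vd} (hu : u ≠ 0) : 0 < D.invForm u u := by
  obtain ⟨i, hi⟩ := not_forall.1 (mt (Module.finBasis ℝ D.Vd).forall_coord_eq_zero_iff.1 hu)
  rw [invForm_apply]
  refine Finset.sum_pos' (fun w _ => Finset.sum_nonneg fun j _ => mul_self_nonneg _)
    ⟨1, Finset.mem_univ _, Finset.sum_pos' (fun j _ => mul_self_nonneg _)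
      ⟨i, Finset.mem_univ _, by simpa using mul_self_pos.2 hi⟩⟩

lemma invForm_actVd (w : D.W) (u v : D.Vd) :
    D.invForm (D.actVd w u) (D.actVd w v) = D.invForm u v := by
  simp only [invForm_apply, ← LinearEquiv.mul_apply, ← map_mul]
  exact Fintype.sum_equiv (Equiv.mulRight w) _ _ fun _ => rfl

lemma invForm_cv {α : D.V} (hα : α ∈ D.roots) (u : D.Vd) :
    D.invForm (D.cv α) u = D.invForm (D.cv α) (D.cv α) / 2 * D.pairR α u := by
  set u' := u - (D.pairR α u / 2) • D.cv α
  have hfix : D.actVd (D.s α) u' = u' := by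
    rw [D.actVd_s α hα]
    simp [u', D.pair_cv_self α hα]
  have h0 : D.invForm (D.cv α) u' = 0 := by
    have := D.invForm_actVd (D.s α) (D.cv α) u'
    rw [D.actVd_s_cv hα, hfix, map_neg, LinearMap.neg_apply] at this
    linarith
  simp only [u', map_sub, map_smul, smul_eq_mul] at h0
  linarith

lemma invForm_actVd_cv (w : D.W) {α : D.V} (hα : α ∈ D.roots) (u : D.Vd) :
    D.invForm u (D.actVd w (D.cv α)) =
      D.invForm (D.cv α) (D.cv α) / 2 * D.pairR (D.actV w α) u := by
  have hpair : D.pairR (D.actV w α) u = D.pairR α (D.actVd w⁻¹ u) := by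
    simpa using D.act_pair w α (D.actVd w⁻¹ u)
  rw [hpair, ← D.invForm_cv hα, D.invForm_comm, ← D.invForm_actVd w⁻¹]
  simp

end InvariantForm

section Complexification

lemma re_pairC_iV (v : D.V) (y : D.VdC) : (D.pairC (D.iV v) y).re = D.pairR v (D.reVd y) := by
  conv_lhs => rw [D.vdc_decomp y]
  rw [D.pairC_add_right, D.pairC_smul_right, D.pairC_compat, D.pairC_compat]
  simp

lemma pairC_actVC_actVdC (w : D.W) (a : D.VC) (y : D.VdC) :
    D.pairC (D.actVC w a) (D.actVdC w y) = D.pairC a y := by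
  conv_lhs => rw [D.vc_decomp a, D.vdc_decomp y]
  conv_rhs => rw [D.vc_decomp a, D.vdc_decomp y]
  simp only [map_add, map_smul, D.actVC_iV, D.actVdC_iVd, D.pairC_add_left, D.pairC_add_right,
    D.pairC_smul_left, D.pairC_smul_right, D.pairC_compat, D.act_pair]

lemma reVd_actVdC (w : D.W) (y : D.VdC) : D.reVd (D.actVdC w y) = D.actVd w (D.reVd y) := by
  refine sub_eq_zero.1 (D.pair_nondeg_right _ fun v => ?_)
  rw [map_sub, sub_eq_zero, ← re_pairC_iV, D.pairR_actVd, ← re_pairC_iV,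
    ← D.pairC_actVC_actVdC w⁻¹, D.actVC_iV]
  simp

end Complexification

section Height

/-- Orders the summands of an induced module so that `S(V_ℂ)` acts triangularly on it
(`InOpenFace.height_lt_height_c`). -/
def height : D.Vd →ₗ[ℝ] ℝ := D.invForm D.rhoCheck

lemma height_actVd_cv (w : D.W) {α : D.V} (hα : α ∈ D.roots) :
    D.height (D.actVd w (D.cv α)) =
      D.invForm (D.cv α) (D.cv α) / 2 * D.pairR (D.actV w α) D.rhoCheck :=
  D.invForm_actVd_cv w hα _

lemma height_actVd_cv_pos {w : D.W} {α : D.V} (hα : α ∈ D.roots)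
    (hwα : D.actV w α ∈ D.posRoots) : 0 < D.height (D.actVd w (D.cv α)) := by
  rw [D.height_actVd_cv w hα]
  exact mul_pos (half_pos (D.invForm_self_pos (D.cv_ne_zero hα))) (D.pairR_rhoCheck_pos hwα)

lemma height_actVd_cv_neg {w : D.W} {α : D.V} (hα : α ∈ D.roots)
    (hwα : -D.actV w α ∈ D.posRoots) : D.height (D.actVd w (D.cv α)) < 0 := by
  rw [D.height_actVd_cv w hα]
  exact mul_neg_of_pos_of_neg (half_pos (D.invForm_self_pos (D.cv_ne_zero hα)))
    (D.pairR_rhoCheck_neg hwα)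

end Height

section Parabolic

variable (PiM : Finset D.V)

lemma isMinRep_one : D.IsMinRep PiM 1 := fun α hα => by simpa using hα.1

lemma eq_one_of_isMinRep_of_mem_WM (cd : CosetData D PiM) {x : D.W} (hx : D.IsMinRep PiM x)
    (hxM : x ∈ D.WM PiM) : x = 1 := by
  rw [(cd.uniq x x 1 hx (Subgroup.one_mem _) (mul_one x).symm).1,
    ← (cd.uniq x 1 x (D.isMinRep_one PiM) hxM (one_mul x).symm).1]

lemma actVd_eq_of_mem_WM (hPiM : PiM ⊆ D.simples) {lam : D.Vd}
    (hM : ∀ α ∈ PiM, D.pairR α lam = 0) {m : D.W} (hm : m ∈ D.WM PiM) :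
    D.actVd m lam = lam := by
  induction hm using Subgroup.closure_induction with
  | mem x hx =>
    obtain ⟨α, hα, rfl⟩ := hx
    rw [D.actVd_s α (D.posRoots_subset (D.simples_subset (hPiM hα))), hM α hα, zero_smul,
      sub_zero]
  | one => simp
  | mul x y _ _ hx hy => rw [map_mul, LinearEquiv.mul_apply, hy, hx]
  | inv x _ hx =>
    conv_lhs => rw [← hx]
    simp

lemma mem_WM_of_actVd_eq {lam : D.Vd} (hdom : ∀ δ ∈ D.simples, 0 ≤ D.pairR δ lam)
    (hsing : ∀ δ ∈ D.simples, D.pairR δ lam = 0 → δ ∈ PiM) {w : D.W}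
    (hw : D.actVd w lam = lam) : w ∈ D.WM PiM := by
  classical
  by_contra hwM
  -- a counterexample `w` maximizing `height (w ρ∨)` admits a larger one, `w s_α`
  obtain ⟨w, hw, hmax⟩ := Finset.exists_max_image
    (Finset.univ.filter fun w => D.actVd w lam = lam ∧ w ∉ D.WM PiM)
    (fun w => D.height (D.actVd w D.rhoCheck)) ⟨w, by simp [hw, hwM]⟩
  simp only [Finset.mem_filter, Finset.mem_univ, true_and, and_imp] at hw hmax
  obtain ⟨hfix, hwM⟩ := hw
  obtain ⟨α, hαs, hneg⟩ :=
    D.exists_simple_neg_of_ne_one (w := w) (by rintro rfl; exact hwM (Subgroup.one_mem _))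
  have hαr : α ∈ D.roots := D.posRoots_subset (D.simples_subset hαs)
  have hα0 : D.pairR α lam = 0 := by
    have h := D.act_pair w α lam
    rw [hfix] at h
    have := D.pairR_nonneg_of_mem_posRoots hdom hneg
    simp only [map_neg, LinearMap.neg_apply] at this
    linarith [hdom α hαs]
  have hws : D.actVd (w * D.s α) lam = lam := by
    rw [map_mul, LinearEquiv.mul_apply, D.actVd_s α hαr, hα0, zero_smul, sub_zero, hfix]
  have hwsM : w * D.s α ∉ D.WM PiM := fun h => hwM <| by
    simpa [mul_assoc, D.s_mul_self hαr] using
      mul_mem h (Subgroup.subset_closure ⟨α, hsing α hαs hα0, rfl⟩ : D.s α ∈ D.WM PiM)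
  have hlt : D.height (D.actVd w D.rhoCheck) < D.height (D.actVd (w * D.s α) D.rhoCheck) := by
    rw [map_mul, LinearEquiv.mul_apply, D.actVd_s α hαr, D.pairR_rhoCheck hαs, one_smul,
      map_sub, map_sub]
    linarith [D.height_actVd_cv_neg hαr hneg]
  exact (hmax _ hws hwsM).not_gt hlt

/-- `λ` lies in the open face of the dominant chamber on which exactly the simple roots of
`Π_M` vanish. -/
structure InOpenFace (lam : D.Vd) : Prop where
  subset_simples : PiM ⊆ D.simples
  pairR_nonneg : ∀ δ ∈ D.simples, 0 ≤ D.pairR δ lam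
  pairR_eq_zero : ∀ α ∈ PiM, D.pairR α lam = 0
  mem_of_pairR_eq_zero : ∀ δ ∈ D.simples, D.pairR δ lam = 0 → δ ∈ PiM

def CorootLE (u lam : D.Vd) : Prop :=
  ∃ d : D.V → ℝ, (∀ α ∈ PiM, 0 ≤ d α) ∧ u = lam - ∑ α ∈ PiM, d α • D.cv α

lemma actVd_eq_of_invForm_le {lam : D.Vd} {w : D.W}
    (h : D.invForm lam lam ≤ D.invForm lam (D.actVd w lam)) : D.actVd w lam = lam := by
  by_contra hne
  have hpos := D.invForm_self_pos (sub_ne_zero.2 hne)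
  simp only [map_sub, LinearMap.sub_apply, D.invForm_actVd, D.invForm_comm (D.actVd w lam) lam]
    at hpos
  linarith

variable {D PiM} in
lemma InOpenFace.eq_one_of_corootLE {lam : D.Vd} (hlam : D.InOpenFace PiM lam)
    (cd : CosetData D PiM) {x : D.W} (hx : D.IsMinRep PiM x) {u : D.Vd}
    (hu : D.CorootLE PiM u lam) (hxu : D.CorootLE PiM (D.actVd x u) lam) : x = 1 := by
  obtain ⟨hPiM, hdom, hM, hsing⟩ := hlam
  obtain ⟨d', hd', rfl⟩ := hu
  obtain ⟨d, -, hxu⟩ := hxu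
  have hroots : ∀ α ∈ PiM, α ∈ D.roots := fun α hα =>
    D.posRoots_subset (D.simples_subset (hPiM hα))
  have horth : D.invForm lam (∑ α ∈ PiM, d α • D.cv α) = 0 := by
    simp only [map_sum, map_smul, smul_eq_mul]
    refine Finset.sum_eq_zero fun α hα => ?_
    rw [D.invForm_comm, D.invForm_cv (hroots α hα), hM α hα, mul_zero, mul_zero]
  have hpos : 0 ≤ D.invForm lam (D.actVd x (∑ α ∈ PiM, d' α • D.cv α)) := by
    simp only [map_sum, map_smul, smul_eq_mul]
    refine Finset.sum_nonneg fun α hα => mul_nonneg (hd' α hα) ?_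
    rw [D.invForm_actVd_cv x (hroots α hα)]
    exact mul_nonneg (half_pos (D.invForm_self_pos (D.cv_ne_zero (hroots α hα)))).le
      (D.pairR_nonneg_of_mem_posRoots hdom
        (hx α ⟨D.simples_subset (hPiM hα), Submodule.subset_span hα⟩))
  have hfix : D.actVd x lam = lam := by
    refine D.actVd_eq_of_invForm_le ?_
    have hxlam : D.actVd x lam =
        lam - ∑ α ∈ PiM, d α • D.cv α + D.actVd x (∑ α ∈ PiM, d' α • D.cv α) := by
      rw [← hxu, map_sub, sub_add_cancel]
    rw [hxlam, map_add, map_sub, horth]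
    linarith
  exact D.eq_one_of_isMinRep_of_mem_WM PiM cd hx (D.mem_WM_of_actVd_eq PiM hdom hsing hfix)

lemma actVd_c (hPiM : PiM ⊆ D.simples) {lam : D.Vd} (hM : ∀ α ∈ PiM, D.pairR α lam = 0)
    (cd : CosetData D PiM) (z : D.W) : D.actVd (cd.c z) lam = D.actVd z lam := by
  conv_rhs => rw [cd.factor z]
  rw [map_mul, LinearEquiv.mul_apply, D.actVd_eq_of_mem_WM PiM hPiM hM (cd.m_mem z)]

lemma pairR_pos_of_isMinRep {lam : D.Vd} (hdom : ∀ δ ∈ D.simples, 0 ≤ D.pairR δ lam)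
    (hsing : ∀ δ ∈ D.simples, D.pairR δ lam = 0 → δ ∈ PiM) {x : D.W} (hx : D.IsMinRep PiM x)
    {γ : D.V} (hγ : γ ∈ D.posRoots) (hxγ : -D.actV x γ ∈ D.posRoots) : 0 < D.pairR γ lam :=
  (D.pairR_nonneg_of_mem_posRoots hdom hγ).lt_of_ne fun h => D.posRoots_not_neg _
    (hx γ ⟨hγ, D.mem_span_of_pairR_eq_zero PiM hdom hsing hγ h.symm⟩) hxγ

variable {D PiM} in
lemma InOpenFace.height_lt_height_c {lam : D.Vd} (hlam : D.InOpenFace PiM lam)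
    (cd : CosetData D PiM) {x : D.W} (hx : D.IsMinRep PiM x) {β : D.V} (hβ : β ∈ D.posRoots)
    (hxβ : -D.actV x⁻¹ β ∈ D.posRoots) :
    D.height (D.actVd x lam) < D.height (D.actVd (cd.c (D.s β * x)) lam) := by
  obtain ⟨hPiM, hdom, hM, hsing⟩ := hlam
  have hβr : β ∈ D.roots := D.posRoots_subset hβ
  have hγ := D.pairR_pos_of_isMinRep PiM hdom hsing hx hxβ (by simpa using hβ)
  have hβpos : 0 < D.height (D.cv β) := by
    simpa using D.height_actVd_cv_pos (w := 1) hβr (by simpa using hβ)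
  rw [D.actVd_c PiM hPiM hM, map_mul, LinearEquiv.mul_apply, D.actVd_s β hβr, map_sub, map_smul,
    D.pairR_actVd, smul_eq_mul]
  simp only [map_neg, LinearMap.neg_apply] at hγ
  nlinarith

end Parabolic

lemma mem_wtAux {X : Type} [AddCommGroup X] [Module ℂ X] {T : D.VC → Module.End ℂ X}
    {lam : D.VdC} {x : X} :
    x ∈ D.wtAux T lam ↔ ∀ ω, ∃ n : ℕ, ((T ω - D.pairC ω lam • 1) ^ n) x = 0 :=
  Iff.rfl

section Induced

variable {D} {PiM : Finset D.V} {cd : CosetData D PiM} {U : Type} [AddCommGroup U]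
  [Module ℂ U] {σ : D.HM PiM →ₐ[ℂ] Module.End ℂ U}
  {πI : D.H →ₐ[ℂ] Module.End ℂ (D.JM PiM → U)} {lam : D.Vd}

lemma IsInducedAction.theta_single_one (hπI : D.IsInducedAction PiM cd σ πI) (ω : D.VC)
    (u : U) : πI (D.θ ω) (Pi.single ⟨1, D.isMinRep_one PiM⟩ u) =
      Pi.single ⟨1, D.isMinRep_one PiM⟩ (σ (D.θM PiM ω) u) := by
  have hempty : D.posRoots.filter (fun β => -D.actV (1 : D.W)⁻¹ β ∈ D.posRoots) = ∅ :=
    Finset.filter_eq_empty_iff.2 fun β hβ => by simpa using D.posRoots_not_neg β hβ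
  rw [hπI.2, hempty]
  simp

lemma IsInducedAction.single_one_mem_wtH (hπI : D.IsInducedAction PiM cd σ πI) {μ : D.VdC}
    {u : U} (hu : u ∈ D.wtAux (fun ω => σ (D.θM PiM ω)) μ) :
    Pi.single ⟨1, D.isMinRep_one PiM⟩ u ∈ D.wtH πI μ := by
  refine D.mem_wtAux.2 fun ω => ?_
  obtain ⟨n, hn⟩ := D.mem_wtAux.1 hu ω
  have hcomm : (πI (D.θ ω) - D.pairC ω μ • 1) ∘ₗ
      LinearMap.single ℂ (fun _ => U) ⟨1, D.isMinRep_one PiM⟩ =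
      LinearMap.single ℂ (fun _ => U) ⟨1, D.isMinRep_one PiM⟩ ∘ₗ
        (σ (D.θM PiM ω) - D.pairC ω μ • 1) := by
    ext u : 1
    simp [hπI.theta_single_one, Pi.single_sub, Pi.single_smul]
  exact ⟨n, by simpa [hn] using
    LinearMap.congr_fun (Module.End.commute_pow_left_of_commute hcomm n) u⟩

lemma IsInducedAction.theta_apply_of_forall_lt (hπI : D.IsInducedAction PiM cd σ πI)
    (hlam : D.InOpenFace PiM lam) {g : D.JM PiM → U} {p : D.JM PiM}
    (hg : ∀ z : D.JM PiM, D.height (D.actVd z.1 lam) < D.height (D.actVd p.1 lam) → g z = 0)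
    (ω : D.VC) : πI (D.θ ω) g p = σ (D.θM PiM (D.actVC p.1⁻¹ ω)) (g p) := by
  classical
  have hoff : ∀ z, πI (D.θ ω) (Pi.single z (g z)) p =
      (Pi.single z (σ (D.θM PiM (D.actVC z.1⁻¹ ω)) (g z)) : D.JM PiM → U) p := by
    intro z
    rw [hπI.2, Pi.add_apply, add_eq_left, Finset.sum_apply]
    refine Finset.sum_eq_zero fun β hβ => ?_
    rw [Finset.mem_filter] at hβ
    by_cases hz : g z = 0
    · simp [hz]
    have hne : (⟨cd.c (D.s β * z.1), cd.c_min _⟩ : D.JM PiM) ≠ p := by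
      rintro rfl
      exact (hlam.height_lt_height_c cd z.2 hβ.1 hβ.2).not_ge (not_lt.1 (mt (hg z) hz))
    simp [Pi.single_eq_of_ne' hne]
  conv_lhs => rw [← Finset.univ_sum_single g]
  rw [map_sum, Finset.sum_apply]
  simp_rw [hoff]
  exact Fintype.sum_pi_single p _

lemma IsInducedAction.mem_wtAux_of_mem_wtH (hπI : D.IsInducedAction PiM cd σ πI)
    (hlam : D.InOpenFace PiM lam) {μ : D.VdC} {f : D.JM PiM → U} (hf : f ∈ D.wtH πI μ)
    {p : D.JM PiM}
    (hp : ∀ z : D.JM PiM, D.height (D.actVd z.1 lam) < D.height (D.actVd p.1 lam) → f z = 0) :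
    f p ∈ D.wtAux (fun ω => σ (D.θM PiM ω)) (D.actVdC p.1⁻¹ μ) := by
  refine D.mem_wtAux.2 fun ω => ?_
  obtain ⟨n, hn⟩ := D.mem_wtAux.1 hf (D.actVC p.1 ω)
  have hpair : D.pairC (D.actVC p.1 ω) μ = D.pairC ω (D.actVdC p.1⁻¹ μ) := by
    rw [← D.pairC_actVC_actVdC p.1⁻¹]
    simp
  have htri := Module.End.pow_apply_of_triangular (fun z : D.JM PiM => D.height (D.actVd z.1 lam))
    (T := πI (D.θ (D.actVC p.1 ω)) - D.pairC (D.actVC p.1 ω) μ • 1)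
    (A := fun q => σ (D.θM PiM (D.actVC q.1⁻¹ (D.actVC p.1 ω))) - D.pairC (D.actVC p.1 ω) μ • 1)
    (fun g q hg => by
      simp only [LinearMap.sub_apply, LinearMap.smul_apply, Module.End.one_apply, Pi.sub_apply,
        Pi.smul_apply, hπI.theta_apply_of_forall_lt hlam hg]) n hp
  rw [hn] at htri
  exact ⟨n, by simpa [hpair] using htri.symm⟩

lemma InOpenFace.wtAux_eq_bot_of_ne_one (hlam : D.InOpenFace PiM lam) (cd : CosetData D PiM)
    (hwts : ∀ μ, D.wtAux (fun ω => σ (D.θM PiM ω)) μ ≠ ⊥ → D.CorootLE PiM (D.reVd μ) lam)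
    {μ : D.VdC} (hμ : D.wtAux (fun ω => σ (D.θM PiM ω)) μ ≠ ⊥) {x : D.W}
    (hx : D.IsMinRep PiM x) (hx1 : x ≠ 1) :
    D.wtAux (fun ω => σ (D.θM PiM ω)) (D.actVdC x⁻¹ μ) = ⊥ := by
  by_contra h
  refine hx1 (hlam.eq_one_of_corootLE cd hx (hwts _ h) ?_)
  convert hwts μ hμ using 1
  rw [reVd_actVdC, ← LinearEquiv.mul_apply, ← map_mul, mul_inv_cancel, map_one]
  rfl

lemma IsInducedAction.finrank_wtH_eq (hπI : D.IsInducedAction PiM cd σ πI)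
    (hlam : D.InOpenFace PiM lam)
    (hwts : ∀ μ, D.wtAux (fun ω => σ (D.θM PiM ω)) μ ≠ ⊥ → D.CorootLE PiM (D.reVd μ) lam)
    {μ : D.VdC} (hμ : D.wtAux (fun ω => σ (D.θM PiM ω)) μ ≠ ⊥) :
    Module.finrank ℂ (D.wtH πI μ) = Module.finrank ℂ (D.wtAux (fun ω => σ (D.θM PiM ω)) μ) := by
  classical
  set o : D.JM PiM := ⟨1, D.isMinRep_one PiM⟩
  set F := fun z : D.JM PiM => D.height (D.actVd z.1 lam)
  have hlowest : ∀ f ∈ D.wtH πI μ, ∀ x, f x ≠ 0 → (∀ z, F z < F x → f z = 0) → x = o := by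
    intro f hf x hfx hx
    by_contra hxo
    have hx1 : x.1 ≠ 1 := fun h => hxo (Subtype.ext h)
    have hmem := hπI.mem_wtAux_of_mem_wtH hlam hf hx
    rw [hlam.wtAux_eq_bot_of_ne_one cd hwts hμ x.2 hx1, Submodule.mem_bot] at hmem
    exact hfx hmem
  have hbelow : ∀ f ∈ D.wtH πI μ, ∀ z, F z < F o → f z = 0 := by
    intro f hf z hz
    by_contra hfz
    obtain ⟨x, hfx, hxz, hx⟩ := exists_lowest_ne_zero F hfz
    rw [hlowest f hf x hfx hx] at hxz
    exact hxz.not_gt hz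
  have hmaps : ∀ f ∈ D.wtH πI μ, f o ∈ D.wtAux (fun ω => σ (D.θM PiM ω)) μ := fun f hf => by
    simpa [o] using hπI.mem_wtAux_of_mem_wtH hlam hf (hbelow f hf)
  refine LinearEquiv.finrank_eq
    (LinearEquiv.ofBijective ((LinearMap.proj o).restrict hmaps) ⟨?_, fun u => ?_⟩)
  · refine (injective_iff_map_eq_zero _).2 fun f hfo => Subtype.ext (funext fun z => ?_)
    have hfo : f.1 o = 0 := congrArg Subtype.val hfo
    by_contra hfz
    obtain ⟨x, hfx, -, hx⟩ := exists_lowest_ne_zero F hfz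
    exact hfx (hlowest f.1 f.2 x hfx hx ▸ hfo)
  · exact ⟨⟨Pi.single o u.1, hπI.single_one_mem_wtH u.2⟩, Subtype.ext (Pi.single_eq_same _ _)⟩

end Induced

end GHA

open GHA in
theorem stmt_7_general (D : GHA) (PiM : Finset D.V) (hPiM : PiM ⊆ D.simples)
    (cd : GHA.CosetData D PiM)
    {U : Type} [AddCommGroup U] [Module ℂ U]
    (σ : D.HM PiM →ₐ[ℂ] Module.End ℂ U)
    (ν : D.VdC)
    (hν1 : ∀ α ∈ PiM, D.pairC (D.iV α) ν = 0)
    (hν2 : ∀ α ∈ D.simples, α ∉ PiM → 0 < D.pairR α (D.reVd ν))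
    (hwts : ∀ μ : D.VdC, D.wtAux (fun ω => σ (D.θM PiM ω)) μ ≠ ⊥ →
      (μ - ν ∈ Submodule.span ℂ ((fun α => D.iVd (D.cv α)) '' (PiM : Set D.V)) ∧
       ∃ d : D.V → ℝ, (∀ α ∈ PiM, 0 ≤ d α) ∧
         D.reVd (μ - ν) = -∑ α ∈ PiM, d α • D.cv α))
    (πI : D.H →ₐ[ℂ] Module.End ℂ (D.JM PiM → U))
    (hπI : GHA.IsInducedAction D PiM cd σ πI) :
    ∀ μ : D.VdC, D.wtAux (fun ω => σ (D.θM PiM ω)) μ ≠ ⊥ →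
      Module.finrank ℂ (D.wtH πI μ) =
      Module.finrank ℂ (D.wtAux (fun ω => σ (D.θM PiM ω)) μ) := by
  have hM : ∀ α ∈ PiM, D.pairR α (D.reVd ν) = 0 := fun α hα => by
    rw [← re_pairC_iV, hν1 α hα, Complex.zero_re]
  have hlam : D.InOpenFace PiM (D.reVd ν) :=
    ⟨hPiM, fun δ hδ => if h : δ ∈ PiM then (hM δ h).ge else (hν2 δ hδ h).le, hM,
      fun δ hδ h0 => by_contra fun h => (hν2 δ hδ h).ne' h0⟩
  have hwts' : ∀ μ, D.wtAux (fun ω => σ (D.θM PiM ω)) μ ≠ ⊥ →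
      D.CorootLE PiM (D.reVd μ) (D.reVd ν) := fun μ hμ => by
    obtain ⟨-, d, hd, hre⟩ := hwts μ hμ
    rw [map_sub, sub_eq_iff_eq_add] at hre
    exact ⟨d, hd, by rw [hre, sub_eq_neg_add]⟩
  exact fun μ hμ => hπI.finrank_wtH_eq hlam hwts' hμ

open GHA in
/-- if the weights of σ are ν-dominant as stated, then for every
weight μ of U the generalized weight multiplicity of μ in X(M,σ) equals that
in U. -/
theorem stmt_7 (D : GHA) (PiM : Finset D.V) (hPiM : PiM ⊆ D.simples)
    (cd : GHA.CosetData D PiM)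
    {U : Type} [AddCommGroup U] [Module ℂ U] [FiniteDimensional ℂ U]
    (σ : D.HM PiM →ₐ[ℂ] Module.End ℂ U)
    (ν : D.VdC)
    (hν1 : ∀ α ∈ PiM, D.pairC (D.iV α) ν = 0)
    (hν2 : ∀ α ∈ D.simples, α ∉ PiM → 0 < D.pairR α (D.reVd ν))
    (hwts : ∀ μ : D.VdC, D.wtAux (fun ω => σ (D.θM PiM ω)) μ ≠ ⊥ →
      (μ - ν ∈ Submodule.span ℂ ((fun α => D.iVd (D.cv α)) '' (PiM : Set D.V)) ∧
       ∃ d : D.V → ℝ, (∀ α ∈ PiM, 0 ≤ d α) ∧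
         D.reVd (μ - ν) = -∑ α ∈ PiM, d α • D.cv α))
    (πI : D.H →ₐ[ℂ] Module.End ℂ (D.JM PiM → U))
    (hπI : GHA.IsInducedAction D PiM cd σ πI) :
    ∀ μ : D.VdC, D.wtAux (fun ω => σ (D.θM PiM ω)) μ ≠ ⊥ →
      Module.finrank ℂ (D.wtH πI μ) =
      Module.finrank ℂ (D.wtAux (fun ω => σ (D.θM PiM ω)) μ) :=
  stmt_7_general D PiM hPiM cd σ ν hν1 hν2 hwts πI hπI
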